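/- Let A be a commutative noetherian ring and let M, N be finitely generated A-modules. Let 𝒢_M and 𝒢_N denote the functors from the category of finitely generated A-modules to itself sending P to G_M(P) (respectively G_N(P)), and sending an A-linear map q: P → Q to the restriction to G_M(P) of the postcomposition map Hom_A(M*, P) → Hom_A(M*, Q), which carries G_M(P) into G_M(Q). If Λ and Λ' are two natural transformations 𝒢_M → 𝒢_N such that the components Λ_A and Λ'_A at the module A are equal, then Λ = Λ'; that is, a natural transformation 𝒢_M → 𝒢_N is uniquely determined by its evaluation at A. -/

import Mathlib

open Module LinearMap TensorProduct

/-- The natural map `α_{M,P} : M ⊗ P → Hom(M*, P)`, `α(m ⊗ p)(λ) = λ(m) • p`. -/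
noncomputable def alphaMap (A : Type) [CommRing A] (M P : Type) [AddCommGroup M]
    [Module A M] [AddCommGroup P] [Module A P] :
    M ⊗[A] P →ₗ[A] (Module.Dual A M →ₗ[A] P) :=
  (dualTensorHom A (Module.Dual A M) P) ∘ₗ
    (TensorProduct.map (Module.Dual.eval A M) LinearMap.id)

/-- `G_M(P)` is the image of `α_{M,P} : M ⊗ P → Hom(M*, P)`. -/
noncomputable def GFun (A : Type) [CommRing A] (M P : Type) [AddCommGroup M] [Module A M]
    [AddCommGroup P] [Module A P] : Submodule A (Module.Dual A M →ₗ[A] P) :=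
  LinearMap.range (alphaMap A M P)

/-- Postcomposition with `q : P → Q` carries `G_M(P)` into `G_M(Q)`. -/
lemma comp_mem_GFun {A : Type} [CommRing A] {M P Q : Type} [AddCommGroup M] [Module A M]
    [AddCommGroup P] [Module A P] [AddCommGroup Q] [Module A Q]
    (q : P →ₗ[A] Q) {x : Module.Dual A M →ₗ[A] P} (hx : x ∈ GFun A M P) :
    q ∘ₗ x ∈ GFun A M Q := by
  obtain ⟨t, rfl⟩ := hx
  refine ⟨LinearMap.lTensor M q t, ?_⟩
  induction t using TensorProduct.induction_on with
  | zero => simp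
  | tmul m p => ext lam; simp [alphaMap]
  | add a b ha hb =>
      simp only [map_add, ha, hb]
      ext lam; simp

/-- The map `G_M(P) → G_M(Q)` induced by postcomposition with `q : P → Q`. -/
noncomputable def GFunMap (A : Type) [CommRing A] (M : Type) [AddCommGroup M] [Module A M]
    {P Q : Type} [AddCommGroup P] [Module A P] [AddCommGroup Q] [Module A Q]
    (q : P →ₗ[A] Q) : ↥(GFun A M P) →ₗ[A] ↥(GFun A M Q) :=
  LinearMap.restrict (LinearMap.llcomp A (Module.Dual A M) P Q q)
    (fun _ hx => comp_mem_GFun q hx)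

/-!
`G_M(P)` is spanned by the elements `α(m ⊗ p)`, and `α(m ⊗ p)` is the image of `α(m ⊗ 1) ∈ G_M(A)`
under `𝒢_M(a ↦ a • p)`. By naturality, `Λ_P` is therefore determined on generators by `Λ_A`.
-/

noncomputable abbrev toGFun (A : Type) [CommRing A] (M P : Type) [AddCommGroup M] [Module A M]
    [AddCommGroup P] [Module A P] : M ⊗[A] P →ₗ[A] ↥(GFun A M P) :=
  (alphaMap A M P).rangeRestrict

section

variable {A : Type} [CommRing A] {M P Q : Type} [AddCommGroup M] [Module A M]
  [AddCommGroup P] [Module A P] [AddCommGroup Q] [Module A Q]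

lemma GFunMap_comp_toGFun (q : P →ₗ[A] Q) :
    GFunMap A M q ∘ₗ toGFun A M P = toGFun A M Q ∘ₗ lTensor M q := by
  ext m p : 3
  apply Subtype.ext
  ext lam
  change (q ∘ₗ alphaMap A M P (m ⊗ₜ p)) lam = alphaMap A M Q (m ⊗ₜ q p) lam
  simp [alphaMap]

lemma GFun.linearMap_ext {X : Type} [AddCommGroup X] [Module A X]
    {f g : ↥(GFun A M P) →ₗ[A] X}
    (h : ∀ (m : M) (p : P), f (toGFun A M P (m ⊗ₜ p)) = g (toGFun A M P (m ⊗ₜ p))) :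
    f = g :=
  (cancel_right (surjective_rangeRestrict (alphaMap A M P))).mp (TensorProduct.ext' h)

lemma toGFun_tmul_eq_GFunMap (m : M) (p : P) :
    toGFun A M P (m ⊗ₜ p) = GFunMap A M (toSpanSingleton A P p) (toGFun A M A (m ⊗ₜ 1)) := by
  rw [← comp_apply, GFunMap_comp_toGFun, comp_apply, lTensor_tmul, toSpanSingleton_apply_one]

end

theorem stmt19_general (A : Type) [CommRing A]
    (M N : Type) [AddCommGroup M] [Module A M]
    [AddCommGroup N] [Module A N]
    (Λ Λ' : ∀ (P : Type) [AddCommGroup P] [Module A P] [Module.Finite A P],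
      ↥(GFun A M P) →ₗ[A] ↥(GFun A N P))
    (hΛ : ∀ (P Q : Type) [AddCommGroup P] [Module A P] [Module.Finite A P]
      [AddCommGroup Q] [Module A Q] [Module.Finite A Q] (q : P →ₗ[A] Q),
      (Λ Q) ∘ₗ GFunMap A M q = GFunMap A N q ∘ₗ (Λ P))
    (hΛ' : ∀ (P Q : Type) [AddCommGroup P] [Module A P] [Module.Finite A P]
      [AddCommGroup Q] [Module A Q] [Module.Finite A Q] (q : P →ₗ[A] Q),
      (Λ' Q) ∘ₗ GFunMap A M q = GFunMap A N q ∘ₗ (Λ' P))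
    (h : Λ A = Λ' A) :
    ∀ (P : Type) [AddCommGroup P] [Module A P] [Module.Finite A P], Λ P = Λ' P := by
  intro P _ _ _
  refine GFun.linearMap_ext fun m p => ?_
  set q := toSpanSingleton A P p
  calc Λ P (toGFun A M P (m ⊗ₜ p))
      = Λ P (GFunMap A M q (toGFun A M A (m ⊗ₜ 1))) := by rw [toGFun_tmul_eq_GFunMap m p]
    _ = GFunMap A N q (Λ A (toGFun A M A (m ⊗ₜ 1))) := LinearMap.congr_fun (hΛ A P q) _
    _ = GFunMap A N q (Λ' A (toGFun A M A (m ⊗ₜ 1))) := by rw [h]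
    _ = Λ' P (GFunMap A M q (toGFun A M A (m ⊗ₜ 1))) := (LinearMap.congr_fun (hΛ' A P q) _).symm
    _ = Λ' P (toGFun A M P (m ⊗ₜ p)) := by rw [toGFun_tmul_eq_GFunMap m p]

/-- A natural transformation `𝒢_M → 𝒢_N` is uniquely determined by its component at `A`. -/
theorem stmt19 (A : Type) [CommRing A] [IsNoetherianRing A]
    (M N : Type) [AddCommGroup M] [Module A M] [Module.Finite A M]
    [AddCommGroup N] [Module A N] [Module.Finite A N]
    (Λ Λ' : ∀ (P : Type) [AddCommGroup P] [Module A P] [Module.Finite A P],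
      ↥(GFun A M P) →ₗ[A] ↥(GFun A N P))
    (hΛ : ∀ (P Q : Type) [AddCommGroup P] [Module A P] [Module.Finite A P]
      [AddCommGroup Q] [Module A Q] [Module.Finite A Q] (q : P →ₗ[A] Q),
      (Λ Q) ∘ₗ GFunMap A M q = GFunMap A N q ∘ₗ (Λ P))
    (hΛ' : ∀ (P Q : Type) [AddCommGroup P] [Module A P] [Module.Finite A P]
      [AddCommGroup Q] [Module A Q] [Module.Finite A Q] (q : P →ₗ[A] Q),
      (Λ' Q) ∘ₗ GFunMap A M q = GFunMap A N q ∘ₗ (Λ' P))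
    (h : Λ A = Λ' A) :
    ∀ (P : Type) [AddCommGroup P] [Module A P] [Module.Finite A P], Λ P = Λ' P :=
  stmt19_general A M N Λ Λ' hΛ hΛ' h
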